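/- For every integer n ≥ 3, the number of independent sets of the squid graph Sq(2n−1;1^n) of cardinality n−1 containing the vertex u is exactly n−1. -/

import Mathlib

def IsStableSet {V : Type*} (G : SimpleGraph V) (S : Finset V) : Prop :=
  ∀ v ∈ S, ∀ w ∈ S, ¬ G.Adj v w

def SemiOrderedStable {V : Type*} (G : SimpleGraph V) (L : List ℕ)
    (B : Fin L.length → Finset V) : Prop :=
  (∀ i, IsStableSet G (B i)) ∧
  (∀ i j, i ≠ j → Disjoint (B i) (B j)) ∧
  (∀ v : V, ∃ i, v ∈ B i) ∧
  (∀ i, (B i).card = L.get i)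

noncomputable def aTilde {V : Type*} (G : SimpleGraph V) (L : List ℕ) : ℕ :=
  Nat.card {B : Fin L.length → Finset V // SemiOrderedStable G L B}

def IsPartitionOf (n : ℕ) (L : List ℕ) : Prop :=
  L.Pairwise (· ≥ ·) ∧ (∀ x ∈ L, 0 < x) ∧ L.sum = n

def DominatedBy (M L : List ℕ) : Prop :=
  ∀ k : ℕ, (M.take k).sum ≤ (L.take k).sum

def StronglyNice {V : Type*} [Fintype V] (G : SimpleGraph V) : Prop :=
  ∀ L M : List ℕ, IsPartitionOf (Fintype.card V) L →
    IsPartitionOf (Fintype.card V) M → DominatedBy M L →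
    aTilde G L ≤ aTilde G M

def HasStablePartitionOfType {V : Type*} (G : SimpleGraph V) (L : List ℕ) : Prop :=
  ∃ B : Fin L.length → Finset V, SemiOrderedStable G L B

def ClawFree {V : Type*} (G : SimpleGraph V) : Prop :=
  ¬ ∃ (c a b d : V), a ≠ b ∧ a ≠ d ∧ b ≠ d ∧
    G.Adj c a ∧ G.Adj c b ∧ G.Adj c d ∧ ¬ G.Adj a b ∧ ¬ G.Adj a d ∧ ¬ G.Adj b d
def squid (n : ℕ) : SimpleGraph (Fin (2 * n - 1) ⊕ Fin n) :=
  SimpleGraph.fromRel (fun x y =>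
    match x, y with
    | Sum.inl i, Sum.inl j => (i.val + 1) % (2 * n - 1) = j.val
    | Sum.inl i, Sum.inr _ => i.val = 0
    | _, _ => False)

/-! ### Auxiliary lemmas: combinatorics of independent sets in a path -/

def Aj (m j : ℕ) : Finset ℕ :=
  (Finset.range m).image (fun i => if i < j then 2*i+2 else 2*i+3)

lemma mem_Aj {m j x : ℕ} :
    x ∈ Aj m j ↔ ∃ i < m, x = if i < j then 2*i+2 else 2*i+3 := by
  simp [Aj, eq_comm]

lemma Aj_card (m j : ℕ) : (Aj m j).card = m := by
  rw [Aj, Finset.card_image_of_injOn, Finset.card_range]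
  intro a _ b _ h
  by_cases ha : a < j <;> by_cases hb : b < j <;> simp [ha, hb] at h <;> omega

lemma Aj_bounds {m j x : ℕ} (hx : x ∈ Aj m j) : 2 ≤ x ∧ x ≤ 2*m+1 := by
  obtain ⟨i, hi, rfl⟩ := mem_Aj.1 hx
  split <;> omega

lemma Aj_no_consec {m j x : ℕ} (hx : x ∈ Aj m j) : x + 1 ∉ Aj m j := by
  intro hy
  obtain ⟨i, hi, h1⟩ := mem_Aj.1 hx
  obtain ⟨i', hi', h2⟩ := mem_Aj.1 hy
  split at h1 <;> split at h2 <;> omega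

lemma stable_card_le {m : ℕ} {A : Finset ℕ} (hs : A ⊆ Finset.Icc 2 (2*m+1))
    (hc : ∀ x ∈ A, x+1 ∉ A) : A.card ≤ m := by
  calc A.card ≤ (Finset.Icc 1 m).card := by
        apply Finset.card_le_card_of_injOn (fun x => x/2)
        · intro x hx
          have := Finset.mem_Icc.1 (hs hx)
          simp only [Finset.mem_coe, Finset.mem_Icc]; omega
        · intro x hx y hy h
          simp only at h
          rcases Nat.lt_trichotomy x y with h'|h'|h'
          · exact absurd ((by omega : y = x+1) ▸ hy) (hc x hx)
          · exact h'
          · exact absurd ((by omega : x = y+1) ▸ hx) (hc y hy)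
    _ = m := by rw [Nat.card_Icc]; omega

lemma Aj_succ_of_le {m j : ℕ} (hj : j ≤ m) : Aj (m+1) j = insert (2*m+3) (Aj m j) := by
  unfold Aj
  rw [Finset.range_add_one, Finset.image_insert, if_neg (by omega : ¬ m < j)]

lemma Aj_succ_self (m : ℕ) : Aj (m+1) (m+1) = insert (2*m+2) (Aj m m) := by
  unfold Aj
  rw [Finset.range_add_one, Finset.image_insert, if_pos (by omega : m < m+1)]
  congr 1
  apply Finset.image_congr
  intro i hi
  simp only [Finset.coe_range, Set.mem_Iio] at hi
  simp only []
  rw [if_pos hi, if_pos (by omega : i < m+1)]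

lemma stable_eq_Aj : ∀ (m : ℕ) (A : Finset ℕ), A ⊆ Finset.Icc 2 (2*m+1) →
    A.card = m → (∀ x ∈ A, x+1 ∉ A) → ∃ j ≤ m, A = Aj m j := by
  intro m
  induction m with
  | zero =>
    intro A _ hc _
    exact ⟨0, le_refl 0, by simpa [Aj] using Finset.card_eq_zero.1 hc⟩
  | succ m ih =>
    intro A hsub hcard hcons
    have hsub' : ∀ x ∈ A, 2 ≤ x ∧ x ≤ 2*m+3 := by
      intro x hx
      have := Finset.mem_Icc.1 (hsub hx)
      omega
    have hor : 2*m+2 ∈ A ∨ 2*m+3 ∈ A := by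
      by_contra h
      push_neg at h
      have hs : A ⊆ Finset.Icc 2 (2*m+1) := by
        intro x hx
        have h1 : x ≠ 2*m+2 := fun e => h.1 (e ▸ hx)
        have h2 : x ≠ 2*m+3 := fun e => h.2 (e ▸ hx)
        have := hsub' x hx
        simp only [Finset.mem_Icc]; omega
      have := stable_card_le hs hcons
      omega
    by_cases h3 : 2*m+3 ∈ A
    · have h2 : 2*m+2 ∉ A := by
        intro h2
        have := hcons (2*m+2) h2
        rw [(by omega : 2*m+2+1 = 2*m+3)] at this
        exact this h3
      have hccard : (A.erase (2*m+3)).card = m := by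
        rw [Finset.card_erase_of_mem h3, hcard]; omega
      have hcsub : A.erase (2*m+3) ⊆ Finset.Icc 2 (2*m+1) := by
        intro x hx
        obtain ⟨hne, hxA⟩ := Finset.mem_erase.1 hx
        have h2' : x ≠ 2*m+2 := fun e => h2 (e ▸ hxA)
        have := hsub' x hxA
        simp only [Finset.mem_Icc]; omega
      have hccons : ∀ x ∈ A.erase (2*m+3), x+1 ∉ A.erase (2*m+3) := fun x hx hy =>
        hcons x (Finset.mem_of_mem_erase hx) (Finset.mem_of_mem_erase hy)
      obtain ⟨j, hj, hA⟩ := ih _ hcsub hccard hccons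
      refine ⟨j, by omega, ?_⟩
      rw [Aj_succ_of_le hj, ← hA, Finset.insert_erase h3]
    · rcases hor with h2 | h3'
      · have h21 : 2*m+1 ∉ A := by
          intro h21
          have := hcons (2*m+1) h21
          rw [(by omega : 2*m+1+1 = 2*m+2)] at this
          exact this h2
        have hccard : (A.erase (2*m+2)).card = m := by
          rw [Finset.card_erase_of_mem h2, hcard]; omega
        have hcsub : A.erase (2*m+2) ⊆ Finset.Icc 2 (2*m+1) := by
          intro x hx
          obtain ⟨hne, hxA⟩ := Finset.mem_erase.1 hx
          have h3' : x ≠ 2*m+3 := fun e => h3 (e ▸ hxA)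
          have := hsub' x hxA
          simp only [Finset.mem_Icc]; omega
        have hccons : ∀ x ∈ A.erase (2*m+2), x+1 ∉ A.erase (2*m+2) := fun x hx hy =>
          hcons x (Finset.mem_of_mem_erase hx) (Finset.mem_of_mem_erase hy)
        obtain ⟨j, hj, hA⟩ := ih _ hcsub hccard hccons
        have hjm : j = m := by
          by_contra hne
          have : 2*m+1 ∈ Aj m j := by
            refine mem_Aj.2 ⟨m-1, by omega, ?_⟩
            rw [if_neg (by omega)]; omega
          rw [← hA] at this
          exact h21 (Finset.mem_of_mem_erase this)
        subst hjm
        refine ⟨j+1, le_refl _, ?_⟩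
        rw [Aj_succ_self, ← hA, Finset.insert_erase h2]
      · exact absurd h3' h3

lemma Aj_inj {m : ℕ} : ∀ {j j' : ℕ}, j ≤ m → j' ≤ m → Aj m j = Aj m j' → j = j' := by
  have key : ∀ j j' : ℕ, j < j' → j' ≤ m → ¬ (Aj m j = Aj m j') := by
    intro j j' hlt hle heq
    have hmem : 2*j+3 ∈ Aj m j := by
      refine mem_Aj.2 ⟨j, by omega, ?_⟩
      rw [if_neg (by omega)]
    rw [heq] at hmem
    obtain ⟨i, hi, h⟩ := mem_Aj.1 hmem
    split at h <;> omega
  intro j j' hj hj' heq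
  rcases Nat.lt_trichotomy j j' with h|h|h
  · exact absurd heq (key j j' h hj')
  · exact h
  · exact absurd heq.symm (key j' j h hj)

/-! ### Auxiliary lemmas about the squid graph -/

lemma squid_adj_iff' (n : ℕ) (hn : 3 ≤ n) (a b : Fin (2*n-1))
    (ha : a.val ≤ 2*n-3) (hb : b.val ≤ 2*n-3) :
    (squid n).Adj (Sum.inl a) (Sum.inl b) ↔ (a.val+1 = b.val ∨ b.val+1 = a.val) := by
  simp only [squid, SimpleGraph.fromRel_adj, ne_eq, Sum.inl.injEq]
  rw [Nat.mod_eq_of_lt (by omega), Nat.mod_eq_of_lt (by omega), Fin.ext_iff]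
  omega

lemma squid_adj_wrap (n : ℕ) (hn : 3 ≤ n) :
    (squid n).Adj (Sum.inl (⟨2*n-2, by omega⟩ : Fin (2*n-1))) (Sum.inl ⟨0, Nat.sub_pos_of_lt (by omega)⟩) := by
  simp only [squid, SimpleGraph.fromRel_adj, ne_eq, Sum.inl.injEq]
  refine ⟨?_, Or.inl ?_⟩
  · rw [Fin.ext_iff]; simp; omega
  · show (2*n-2+1) % (2*n-1) = 0
    rw [(by omega : 2*n-2+1 = 2*n-1), Nat.mod_self]

lemma squid_adj_pendant (n : ℕ) (hn : 3 ≤ n) (k : Fin n) :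
    (squid n).Adj (Sum.inl (⟨0, Nat.sub_pos_of_lt (by omega)⟩ : Fin (2*n-1))) (Sum.inr k) := by
  simp [squid, SimpleGraph.fromRel_adj]

/-- The `j`-th independent set of the squid containing `u`. -/
def Fset (n : ℕ) (hn : 3 ≤ n) (j : ℕ) : Finset (Fin (2*n-1) ⊕ Fin n) :=
  insert (Sum.inl ⟨0, Nat.sub_pos_of_lt (by omega)⟩)
    (((Aj (n-2) j).attachFin (fun a ha => by have := Aj_bounds ha; omega)).image Sum.inl)

lemma mem_Fset {n : ℕ} {hn : 3 ≤ n} {j : ℕ} {x : Fin (2*n-1) ⊕ Fin n} :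
    x ∈ Fset n hn j ↔ x = Sum.inl ⟨0, Nat.sub_pos_of_lt (by omega)⟩ ∨
      ∃ i : Fin (2*n-1), i.val ∈ Aj (n-2) j ∧ x = Sum.inl i := by
  simp only [Fset, Finset.mem_insert, Finset.mem_image]
  constructor
  · rintro (h | ⟨i, hi, rfl⟩)
    · exact Or.inl h
    · exact Or.inr ⟨i, (Finset.mem_attachFin _).1 hi, rfl⟩
  · rintro (h | ⟨i, hi, rfl⟩)
    · exact Or.inl h
    · exact Or.inr ⟨i, (Finset.mem_attachFin _).2 hi, rfl⟩

theorem squid_count_stable_sets_with_u (n : ℕ) (hn : 3 ≤ n) :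
    Nat.card {S : Finset (Fin (2 * n - 1) ⊕ Fin n) //
        IsStableSet (squid n) S ∧
        Sum.inl (⟨0, by omega⟩ : Fin (2 * n - 1)) ∈ S ∧
        S.card = n - 1} = n - 1 := by
  have key : ∀ j : Fin (n-1),
      IsStableSet (squid n) (Fset n hn j.val) ∧
      Sum.inl (⟨0, by omega⟩ : Fin (2 * n - 1)) ∈ Fset n hn j.val ∧
      (Fset n hn j.val).card = n - 1 := by
    intro j
    refine ⟨?_, Finset.mem_insert_self _ _, ?_⟩
    · intro x hx y hy hadj
      rcases mem_Fset.1 hx with rfl | ⟨i, hi, rfl⟩ <;>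
        rcases mem_Fset.1 hy with rfl | ⟨i', hi', rfl⟩
      · exact (squid n).loopless.irrefl _ hadj
      · have hb := Aj_bounds hi'
        rw [squid_adj_iff' n hn _ _ (by show 0 ≤ 2*n-3; omega) (by omega)] at hadj
        have hadj' : 0 + 1 = i'.val ∨ i'.val + 1 = 0 := hadj
        omega
      · have hb := Aj_bounds hi
        rw [squid_adj_iff' n hn _ _ (by omega) (by show 0 ≤ 2*n-3; omega)] at hadj
        have hadj' : i.val + 1 = 0 ∨ 0 + 1 = i.val := hadj
        omega
      · have hb := Aj_bounds hi
        have hb' := Aj_bounds hi'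
        rw [squid_adj_iff' n hn _ _ (by omega) (by omega)] at hadj
        rcases hadj with h | h
        · exact Aj_no_consec hi (h ▸ hi')
        · exact Aj_no_consec hi' (h ▸ hi)
    · rw [Fset, Finset.card_insert_of_notMem, Finset.card_image_of_injective _ Sum.inl_injective,
        Finset.card_attachFin, Aj_card]
      · omega
      · intro h
        obtain ⟨i, hi, heq⟩ := Finset.mem_image.1 h
        have hval : i.val ∈ Aj (n-2) j.val := (Finset.mem_attachFin _).1 hi
        have := Aj_bounds hval
        have : i.val = 0 := by
          have := Sum.inl_injective heq
          rw [this]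
        omega
  let f : Fin (n-1) → {S : Finset (Fin (2 * n - 1) ⊕ Fin n) //
        IsStableSet (squid n) S ∧
        Sum.inl (⟨0, by omega⟩ : Fin (2 * n - 1)) ∈ S ∧
        S.card = n - 1} := fun j => ⟨Fset n hn j.val, key j⟩
  have hAjofF : ∀ (j j' : ℕ), Fset n hn j = Fset n hn j' →
      ∀ a ∈ Aj (n-2) j, a ∈ Aj (n-2) j' := by
    intro j j' heq a ha
    have hb := Aj_bounds ha
    have hx : (Sum.inl ⟨a, by omega⟩ : Fin (2*n-1) ⊕ Fin n) ∈ Fset n hn j :=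
      mem_Fset.2 (Or.inr ⟨⟨a, by omega⟩, ha, rfl⟩)
    rw [heq] at hx
    rcases mem_Fset.1 hx with h | ⟨i, hi, h⟩
    · have : a = 0 := by simpa [Fin.ext_iff] using Sum.inl_injective h
      omega
    · have : i.val = a := by
        have := Sum.inl_injective h
        rw [← this]
      rwa [this] at hi
  have hinj : Function.Injective f := by
    intro j j' h
    have heq : Fset n hn j.val = Fset n hn j'.val := congrArg Subtype.val h
    have : Aj (n-2) j.val = Aj (n-2) j'.val := by
      apply Finset.Subset.antisymm
      · exact fun a ha => hAjofF _ _ heq a ha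
      · exact fun a ha => hAjofF _ _ heq.symm a ha
    have hj : j.val ≤ n-2 := by omega
    have hj' : j'.val ≤ n-2 := by omega
    exact Fin.ext (Aj_inj hj hj' this)
  have hsurj : Function.Surjective f := by
    rintro ⟨S, hstab, humem, hScard⟩
    have hnotinr : ∀ k, Sum.inr k ∉ S := fun k hk =>
      hstab _ humem _ hk (squid_adj_pendant n hn k)
    have hform : ∀ x ∈ S, x ≠ Sum.inl ⟨0, by omega⟩ →
        ∃ i : Fin (2*n-1), x = Sum.inl i ∧ 2 ≤ i.val ∧ i.val ≤ 2*n-3 := by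
      intro x hx hxu
      cases x with
      | inr k => exact absurd hx (hnotinr k)
      | inl i =>
        refine ⟨i, rfl, ?_, ?_⟩
        · have h0 : i.val ≠ 0 := by
            intro h
            exact hxu (congrArg Sum.inl (Fin.ext h))
          have h1 : i.val ≠ 1 := by
            intro h
            apply hstab _ humem _ hx
            rw [squid_adj_iff' n hn _ _ (by show 0 ≤ 2*n-3; omega) (by omega)]
            left; show 0 + 1 = i.val; omega
          omega
        · have h2 : i.val ≠ 2*n-2 := by
            intro h
            apply hstab _ hx _ humem
            have : i = ⟨2*n-2, by omega⟩ := Fin.ext h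
            rw [this]
            exact squid_adj_wrap n hn
          have := i.isLt
          omega
    set A : Finset ℕ := (S.erase (Sum.inl ⟨0, by omega⟩)).image
      (fun x => Sum.elim Fin.val (fun _ => 0) x) with hA
    have hmem_erase : ∀ x ∈ S.erase (Sum.inl (⟨0, by omega⟩ : Fin (2*n-1))),
        ∃ i : Fin (2*n-1), x = Sum.inl i ∧ 2 ≤ i.val ∧ i.val ≤ 2*n-3 := by
      intro x hx
      obtain ⟨hne, hxS⟩ := Finset.mem_erase.1 hx
      exact hform x hxS hne
    have hAsub : A ⊆ Finset.Icc 2 (2*(n-2)+1) := by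
      intro a ha
      obtain ⟨x, hx, rfl⟩ := Finset.mem_image.1 ha
      obtain ⟨i, rfl, h1, h2⟩ := hmem_erase x hx
      simp only [Sum.elim_inl, Finset.mem_Icc]
      omega
    have hAcard : A.card = n-2 := by
      rw [hA, Finset.card_image_of_injOn, Finset.card_erase_of_mem humem, hScard]
      · omega
      · intro x hx y hy hxy
        obtain ⟨i, rfl, _, _⟩ := hmem_erase x hx
        obtain ⟨i', rfl, _, _⟩ := hmem_erase y hy
        simp only [Sum.elim_inl] at hxy
        exact congrArg Sum.inl (Fin.ext hxy)
    have hAcons : ∀ a ∈ A, a+1 ∉ A := by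
      intro a ha ha'
      obtain ⟨x, hx, hxa⟩ := Finset.mem_image.1 ha
      obtain ⟨y, hy, hya⟩ := Finset.mem_image.1 ha'
      obtain ⟨i, rfl, h1, h2⟩ := hmem_erase x hx
      obtain ⟨i', rfl, h1', h2'⟩ := hmem_erase y hy
      simp only [Sum.elim_inl] at hxa hya
      apply hstab _ (Finset.mem_of_mem_erase hx) _ (Finset.mem_of_mem_erase hy)
      rw [squid_adj_iff' n hn _ _ (by omega) (by omega)]
      left; omega
    obtain ⟨j, hj, hAeq⟩ := stable_eq_Aj (n-2) A hAsub hAcard hAcons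
    refine ⟨⟨j, by omega⟩, ?_⟩
    apply Subtype.ext
    show Fset n hn j = S
    ext x
    rw [mem_Fset]
    constructor
    · rintro (rfl | ⟨i, hi, rfl⟩)
      · exact humem
      · rw [← hAeq] at hi
        obtain ⟨y, hy, hyv⟩ := Finset.mem_image.1 hi
        obtain ⟨i', rfl, _, _⟩ := hmem_erase y hy
        simp only [Sum.elim_inl] at hyv
        have : i' = i := Fin.ext hyv
        rw [← this]
        exact Finset.mem_of_mem_erase hy
    · intro hx
      by_cases hxu : x = Sum.inl ⟨0, by omega⟩
      · exact Or.inl hxu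
      · obtain ⟨i, rfl, h1, h2⟩ := hform x hx hxu
        refine Or.inr ⟨i, ?_, rfl⟩
        rw [← hAeq]
        apply Finset.mem_image.2
        refine ⟨Sum.inl i, Finset.mem_erase.2 ⟨hxu, hx⟩, rfl⟩
  have hbij : Function.Bijective f := ⟨hinj, hsurj⟩
  rw [← Nat.card_eq_of_bijective f hbij]
  simp
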